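/- arXiv:1206.5167 — 2 statements merged into one kernel-verified Lean document; each statement's English description precedes it below -/
import Mathlib

section
/- Let V ⊆ ℝ^n be a regular space, f a feasible flow, and f' another feasible flow with f'_r > f_r. Then there exists an augmenting r-path P for f; moreover P can be chosen so that f + λP is feasible for some λ > 0 and P conforms to f' - f. -/
open Finset

variable {n : ℕ}

/-- The support of a vector. -/
def supp (x : Fin n → ℝ) : Set (Fin n) := {j | x j ≠ 0}

/-- A nonzero vector of `V` is elementary if no nonzero vector of `V` has support
properly contained in its support. -/
def IsElementary (V : Submodule ℝ (Fin n → ℝ)) (x : Fin n → ℝ) : Prop :=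
  x ∈ V ∧ x ≠ 0 ∧ ∀ y ∈ V, y ≠ 0 → ¬ (supp y ⊂ supp x)

/-- A primitive vector: elementary with entries in `{-1, 0, 1}`. -/
def IsPrimitive (V : Submodule ℝ (Fin n → ℝ)) (x : Fin n → ℝ) : Prop :=
  IsElementary V x ∧ ∀ j, x j ∈ ({-1, 0, 1} : Set ℝ)

/-- `y` conforms to `x`. -/
def Conforms (y x : Fin n → ℝ) : Prop := ∀ j, y j ≠ 0 → y j * x j > 0

/-- A regular space: the kernel of a totally unimodular matrix. -/
def IsRegularSpace (V : Submodule ℝ (Fin n → ℝ)) : Prop :=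
  ∃ (m : ℕ) (A : Matrix (Fin m) (Fin n) ℝ),
    A.IsTotallyUnimodular ∧ V = LinearMap.ker A.mulVecLin

/-- An `r`-path: a primitive vector with value `+1` at `r`. -/
def IsRPath (V : Submodule ℝ (Fin n → ℝ)) (r : Fin n) (P : Fin n → ℝ) : Prop :=
  IsPrimitive V P ∧ P r = 1

/-- Feasibility with respect to capacity `c` (no constraint at `r`). -/
def Feasible (c : Fin n → ℝ) (r : Fin n) (f : Fin n → ℝ) : Prop :=
  ∀ j, j ≠ r → 0 ≤ f j ∧ f j ≤ c j

/-- An `r`-path `P` is augmenting for the flow `f`. -/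
def Augmenting (V : Submodule ℝ (Fin n → ℝ)) (c : Fin n → ℝ) (r : Fin n)
    (f P : Fin n → ℝ) : Prop :=
  IsRPath V r P ∧ ∃ ε : ℝ, 0 < ε ∧ Feasible c r (f + ε • P)

/-- The 1-norm. -/
def onorm (x : Fin n → ℝ) : ℝ := ∑ j, |x j|

/-- A shortest augmenting `r`-path. -/
def ShortestAug (V : Submodule ℝ (Fin n → ℝ)) (c : Fin n → ℝ) (r : Fin n)
    (f P : Fin n → ℝ) : Prop :=
  Augmenting V c r f P ∧ ∀ Q, Augmenting V c r f Q → onorm P ≤ onorm Q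

/-- `g` is obtained from `f` by maximal augmentation along `P`. -/
def MaxAug (c : Fin n → ℝ) (r : Fin n) (f P g : Fin n → ℝ) : Prop :=
  ∃ ε : ℝ, 0 < ε ∧ g = f + ε • P ∧ Feasible c r g ∧
    ∀ ε' : ℝ, ε < ε' → ¬ Feasible c r (f + ε' • P)

/-- A conformal primitive decomposition of `P + Q` in which `M` and `J` are the two
`r`-path summands (`M` playing the role of `P ∧ Q` and `J` of `P ∨ Q`). -/
def MeetJoinDecomp (V : Submodule ℝ (Fin n → ℝ)) (r : Fin n)
    (P Q M J : Fin n → ℝ) : Prop :=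
  ∃ (k : ℕ) (p : Fin k → Fin n → ℝ) (a b : Fin k),
    (∀ i, IsPrimitive V (p i)) ∧ (∀ i, Conforms (p i) (P + Q)) ∧
    (∑ i, p i) = P + Q ∧ a ≠ b ∧ p a = M ∧ p b = J ∧
    p a r = 1 ∧ p b r = 1 ∧ ∀ i, p i r = 1 → i = a ∨ i = b

/-!
The difference `d = f' - f` lies in `V` and has `d r > 0`. Cutting down the support of a vector
of `V` while keeping it conformal to `d` yields an elementary vector `z` of `V` conformal to `d`
with `z r ≠ 0`. In the kernel of a totally unimodular matrix, Cramer's rule on a nonsingular square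
submatrix shows that all nonzero entries of an elementary vector have the same absolute value, so
`P = (z r)⁻¹ • z` is an `r`-path. As `P` conforms to `f' - f`, a short step `f + ε • P` moves each
coordinate of `f` part of the way towards `f'`, and so stays feasible.
-/

section Conformal

variable {V : Submodule ℝ (Fin n → ℝ)}

lemma supp_neg (x : Fin n → ℝ) : supp (-x) = supp x := by
  ext j; simp [supp]

lemma conforms_self (x : Fin n → ℝ) : Conforms x x := fun _ hj => mul_self_pos.2 hj

lemma Conforms.supp_subset {y x : Fin n → ℝ} (h : Conforms y x) : supp y ⊆ supp x :=
  fun j hj hxj => by simpa [hxj] using h j hj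

lemma Conforms.trans {z y x : Fin n → ℝ} (hzy : Conforms z y) (hyx : Conforms y x) :
    Conforms z x := by
  intro j hj
  have h := mul_pos (hzy j hj) (hyx j (hzy.supp_subset hj))
  have : 0 < z j * x j * y j ^ 2 := by linarith
  exact pos_of_mul_pos_left this (sq_nonneg _)

lemma Conforms.smul_left {y x : Fin n → ℝ} (h : Conforms y x) {a : ℝ} (ha : 0 < a) :
    Conforms (a • y) x := by
  intro j hj
  simp only [Pi.smul_apply, smul_eq_mul] at hj ⊢
  rw [mul_assoc]
  exact mul_pos ha (h j (right_ne_zero_of_mul hj))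

lemma IsElementary.smul {x : Fin n → ℝ} (hx : IsElementary V x) {a : ℝ} (ha : a ≠ 0) :
    IsElementary V (a • x) := by
  obtain ⟨hxV, hx0, hmin⟩ := hx
  have hsupp : supp (a • x) = supp x := by ext j; simp [supp, ha]
  exact ⟨V.smul_mem a hxV, smul_ne_zero ha hx0, hsupp ▸ hmin⟩

lemma exists_conforms_sub_smul {x w : Fin n → ℝ} (hwx : supp w ⊆ supp x)
    (hpos : ∃ j, 0 < w j * x j) :
    ∃ t : ℝ, 0 < t ∧ Conforms (x - t • w) x ∧ supp (x - t • w) ⊂ supp x ∧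
      ∀ k, x k ≠ 0 → w k * x k ≤ 0 → (x - t • w) k ≠ 0 := by
  classical
  obtain ⟨j₀, hj₀, hmin⟩ := (univ.filter fun j => 0 < w j * x j).exists_min_image
    (fun j => x j / w j) (by simpa [Finset.Nonempty] using hpos)
  have hwx₀ : 0 < w j₀ * x j₀ := (mem_filter.1 hj₀).2
  set t := x j₀ / w j₀
  have ht : 0 < t := by
    rcases mul_pos_iff.1 hwx₀ with ⟨hw, hx⟩ | ⟨hw, hx⟩
    exacts [div_pos hx hw, div_pos_of_neg_of_neg hx hw]
  have hval : ∀ j, (x - t • w) j * x j = x j ^ 2 - t * (w j * x j) := fun j => by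
    simp only [Pi.sub_apply, Pi.smul_apply, smul_eq_mul]; ring
  -- `t` is the longest step along `-w` for which no coordinate of `x` changes sign
  have hstep : ∀ j, t * (w j * x j) ≤ x j ^ 2 := by
    intro j
    by_cases hj : 0 < w j * x j
    · have hwj : w j ≠ 0 := left_ne_zero_of_mul hj.ne'
      calc t * (w j * x j) ≤ x j / w j * (w j * x j) :=
            mul_le_mul_of_nonneg_right (hmin j (by simp [hj])) hj.le
        _ = x j ^ 2 := by field_simp
    · nlinarith [sq_nonneg (x j)]
  have hconf : Conforms (x - t • w) x := by
    intro j hj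
    have hxj : x j ≠ 0 := fun hxj => hj (by
      have hwj : w j = 0 := not_not.1 fun hwj => hwx hwj hxj
      simp [hxj, hwj])
    exact lt_of_le_of_ne (by rw [hval]; linarith [hstep j]) (mul_ne_zero hj hxj).symm
  refine ⟨t, ht, hconf, ⟨hconf.supp_subset, fun h => ?_⟩, fun k hk hwk h => ?_⟩
  · have hx₀ : x j₀ ≠ 0 := right_ne_zero_of_mul hwx₀.ne'
    have hw₀ : w j₀ ≠ 0 := left_ne_zero_of_mul hwx₀.ne'
    exact h hx₀ (by simp [t]; field_simp; ring)
  · have := hval k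
    rw [h, zero_mul] at this
    nlinarith [sq_pos_of_ne_zero hk]

lemma exists_conforms_of_mul_nonpos {x w : Fin n → ℝ} (hx : x ∈ V) {k : Fin n} (hk : x k ≠ 0)
    (hw : w ∈ V) (hwx : supp w ⊆ supp x) (hwk : w k * x k ≤ 0) (hpos : ∃ j, 0 < w j * x j) :
    ∃ x' ∈ V, Conforms x' x ∧ x' k ≠ 0 ∧ supp x' ⊂ supp x := by
  obtain ⟨t, -, hconf, hss, hkeep⟩ := exists_conforms_sub_smul hwx hpos
  exact ⟨x - t • w, V.sub_mem hx (V.smul_mem t hw), hconf, hkeep k hk hwk, hss⟩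

lemma exists_conforms_supp_ssubset {x y : Fin n → ℝ} (hx : x ∈ V) {k : Fin n} (hk : x k ≠ 0)
    (hy : y ∈ V) (hy0 : y ≠ 0) (hyx : supp y ⊂ supp x) :
    ∃ x' ∈ V, Conforms x' x ∧ x' k ≠ 0 ∧ supp x' ⊂ supp x := by
  have hnegx : supp (-y) ⊆ supp x := (supp_neg y).symm ▸ hyx.subset
  by_cases hyk : y k = 0
  · obtain ⟨j, hj⟩ := Function.ne_iff.1 hy0
    rcases (mul_ne_zero hj (hyx.subset hj)).lt_or_gt with hneg | hpos
    · exact exists_conforms_of_mul_nonpos hx hk (V.neg_mem hy) hnegx (by simp [hyk])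
        ⟨j, by simpa using hneg⟩
    · exact exists_conforms_of_mul_nonpos hx hk hy hyx.subset (by simp [hyk]) ⟨j, hpos⟩
  obtain ⟨w, hw, hws, hwk⟩ : ∃ w ∈ V, supp w = supp y ∧ w k * x k < 0 := by
    rcases (mul_ne_zero hyk hk).lt_or_gt with hneg | hpos
    · exact ⟨y, hy, rfl, hneg⟩
    · exact ⟨-y, V.neg_mem hy, supp_neg y, by simpa using hpos⟩
  by_cases hpos : ∃ j, 0 < w j * x j
  · exact exists_conforms_of_mul_nonpos hx hk hw (hws ▸ hyx.subset) hwk.le hpos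
  push Not at hpos
  refine ⟨-w, V.neg_mem hw, fun j hj => ?_, by simpa using left_ne_zero_of_mul hwk.ne,
    by rwa [supp_neg, hws]⟩
  have hwj : w j ≠ 0 := by simpa using hj
  have hxj : x j ≠ 0 := hyx.subset (hws ▸ hwj : j ∈ supp y)
  simpa using (hpos j).lt_of_ne (mul_ne_zero hwj hxj)

theorem exists_isElementary_conforms {x : Fin n → ℝ} (hx : x ∈ V) {k : Fin n} (hk : x k ≠ 0) :
    ∃ z, IsElementary V z ∧ Conforms z x ∧ z k ≠ 0 := by
  induction hN : (supp x).ncard using Nat.strong_induction_on generalizing x with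
  | _ N ih =>
  by_cases hel : IsElementary V x
  · exact ⟨x, hel, conforms_self x, hk⟩
  obtain ⟨y, hy, hy0, hyx⟩ : ∃ y ∈ V, y ≠ 0 ∧ supp y ⊂ supp x := by
    have hx0 : x ≠ 0 := fun h => hk (by simp [h])
    simpa [IsElementary, hx, hx0] using hel
  obtain ⟨x', hx', hconf, hk', hss⟩ := exists_conforms_supp_ssubset hx hk hy hy0 hyx
  obtain ⟨z, hz, hzx', hzk⟩ := ih _ (hN ▸ Set.ncard_lt_ncard hss (Set.toFinite _)) hx' hk' rfl
  exact ⟨z, hz, hzx'.trans hconf, hzk⟩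

end Conformal

section TotallyUnimodular

open Matrix

lemma Matrix.cramer_mulVec {ι K : Type*} [Fintype ι] [DecidableEq ι] [CommRing K]
    (B : Matrix ι ι K) (x : ι → K) : B.cramer (B *ᵥ x) = B.det • x := by
  rw [cramer_eq_adjugate_mulVec, mulVec_mulVec, adjugate_mul, smul_mulVec, one_mulVec]

lemma Matrix.exists_det_submatrix_ne_zero {m ι K : Type*} [Fintype m] [Fintype ι] [DecidableEq ι]
    [Field K] {M : Matrix m ι K} (h : LinearIndependent K M.col) :
    ∃ g : ι → m, (M.submatrix g id).det ≠ 0 := by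
  have hrank : M.rank = Fintype.card ι := by
    rw [← rank_transpose]; exact h.rank_matrix
  have hspan : Submodule.span K (Set.range M.row) = ⊤ := by
    apply Submodule.eq_top_of_finrank_eq
    rw [← rank_eq_finrank_span_row, hrank, Module.finrank_fintype_fun_eq_card]
  obtain ⟨κ, a, -, hsp, hli⟩ := exists_linearIndependent' K M.row
  let b : Module.Basis κ K (ι → K) := Module.Basis.mk hli (by rw [hsp, hspan])
  have : Finite κ := Module.Finite.finite_basis b
  have hcard : Nat.card ι = Nat.card κ := by
    rw [← Module.finrank_eq_nat_card_basis b, Module.finrank_fintype_fun_eq_card,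
      Nat.card_eq_fintype_card]
  obtain ⟨e⟩ := Finite.card_eq.1 hcard
  have hrows : LinearIndependent K (M.submatrix (a ∘ e) id).row := hli.comp e e.injective
  exact ⟨a ∘ e, ((isUnit_iff_isUnit_det _).1 (linearIndependent_rows_iff_isUnit.1 hrows)).ne_zero⟩

lemma IsElementary.linearIndepOn_col {m : ℕ} {A : Matrix (Fin m) (Fin n) ℝ} {z : Fin n → ℝ}
    (hz : IsElementary (LinearMap.ker A.mulVecLin) z) {S : Set (Fin n)} (hS : S ⊂ supp z) :
    LinearIndepOn ℝ A.col S := by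
  rw [linearIndepOn_iff]
  intro l hl hl0
  by_contra hne
  have hsupp : supp l ⊆ S := fun j hj => hl (Finsupp.mem_support_iff.2 hj)
  refine hz.2.2 l ?_ (fun h => hne (DFunLike.coe_injective h))
    (Set.ssubset_of_subset_of_ssubset hsupp hS)
  rw [LinearMap.mem_ker, mulVecLin_apply, ← hl0, Finsupp.linearCombination_apply,
    Finsupp.sum_fintype _ _ (by simp)]
  ext i
  simp [mulVec, dotProduct, mul_comm]

lemma Matrix.IsTotallyUnimodular.eq_or_eq_neg_or_eq_zero_of_mulVec_eq {m n ι K : Type*}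
    [Fintype ι] [DecidableEq ι] [DecidableEq n] [Field K] {A : Matrix m n K}
    (hA : A.IsTotallyUnimodular) {g : ι → m} {e : ι → n} (hdet : (A.submatrix g e).det ≠ 0)
    {x : ι → K} {a : K} {k : n}
    (hx : A.submatrix g e *ᵥ x = a • fun i => A (g i) k) (i : ι) :
    x i = a ∨ x i = -a ∨ x i = 0 := by
  have hcol : (A.submatrix g e).updateCol i (fun i => A (g i) k) =
      A.submatrix g (Function.update e i k) := by
    ext i' j
    by_cases hj : j = i
    · subst hj; simp
    · simp [hj]
  have hcramer :
      (A.submatrix g e).det * x i = a * (A.submatrix g (Function.update e i k)).det := by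
    rw [← smul_eq_mul, ← Pi.smul_apply, ← cramer_mulVec, hx, cramer_apply, det_updateCol_smul,
      hcol]
  obtain ⟨s, hs⟩ := (isTotallyUnimodular_iff_fintype A).1 hA ι g e
  obtain ⟨s', hs'⟩ := (isTotallyUnimodular_iff_fintype A).1 hA ι g (Function.update e i k)
  rw [← hs] at hdet hcramer
  rw [← hs'] at hcramer
  cases s <;> cases s' <;> simp at hdet hcramer ⊢ <;> grind

theorem IsElementary.eq_or_eq_neg_or_eq_zero {m : ℕ} {A : Matrix (Fin m) (Fin n) ℝ}
    (hA : A.IsTotallyUnimodular) {z : Fin n → ℝ} (hz : IsElementary (LinearMap.ker A.mulVecLin) z)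
    {k : Fin n} (hk : z k ≠ 0) (j : Fin n) : z j = z k ∨ z j = -z k ∨ z j = 0 := by
  classical
  by_cases hjk : j = k
  · simp [hjk]
  by_cases hj : z j = 0
  · simp [hj]
  -- on `T = supp z \ {k}`, `z` solves a square system with a nonsingular submatrix of `A`
  set T : Set (Fin n) := supp z \ {k}
  have hsum : ∀ F : Fin n → ℝ, (∀ j, z j = 0 → F j = 0) → ∑ j, F j = F k + ∑ j : T, F j := by
    intro F hF
    calc ∑ j, F j = ∑ j ∈ insert k T.toFinset, F j := by
          refine (Finset.sum_subset (subset_univ _) fun j _ hjT => hF j ?_).symm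
          by_contra hzj
          exact hjT (mem_insert.2 (or_iff_not_imp_left.2 fun h => Set.mem_toFinset.2 ⟨hzj, h⟩))
      _ = F k + ∑ j : T, F j := by rw [Finset.sum_insert (by simp [T]), Finset.sum_set_coe]
  obtain ⟨g, hg⟩ := exists_det_submatrix_ne_zero (M := A.submatrix id ((↑) : T → Fin n))
    (hz.linearIndepOn_col (Set.sdiff_singleton_ssubset.2 hk))
  have hsys : A.submatrix g (↑) *ᵥ (fun i : T => z i) = (-z k) • fun i => A (g i) k := by
    ext i
    have h0 : ∑ j, A (g i) j * z j = 0 := congrFun (LinearMap.mem_ker.1 hz.1) (g i)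
    rw [hsum _ fun j hj => by simp [hj]] at h0
    simp only [mulVec, dotProduct, submatrix_apply, Pi.smul_apply, smul_eq_mul]
    linarith
  have := hA.eq_or_eq_neg_or_eq_zero_of_mulVec_eq hg hsys ⟨j, hj, hjk⟩
  rw [neg_neg] at this
  tauto

theorem IsElementary.isPrimitive_inv_smul {m : ℕ} {A : Matrix (Fin m) (Fin n) ℝ}
    (hA : A.IsTotallyUnimodular) {z : Fin n → ℝ} (hz : IsElementary (LinearMap.ker A.mulVecLin) z)
    {k : Fin n} (hk : z k ≠ 0) : IsPrimitive (LinearMap.ker A.mulVecLin) ((z k)⁻¹ • z) := by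
  refine ⟨hz.smul (inv_ne_zero hk), fun j => ?_⟩
  rcases hz.eq_or_eq_neg_or_eq_zero hA hk j with h | h | h <;> simp [h, hk]

end TotallyUnimodular

lemma Conforms.div_nonneg {P d : Fin n → ℝ} (h : Conforms P d) (j : Fin n) : 0 ≤ P j / d j := by
  by_cases hP : P j = 0
  · simp [hP]
  rcases mul_pos_iff.1 (h j hP) with ⟨hPj, hdj⟩ | ⟨hPj, hdj⟩
  exacts [(div_pos hPj hdj).le, (div_pos_of_neg_of_neg hPj hdj).le]

theorem exists_feasible_add_smul_of_conforms {c : Fin n → ℝ} {r : Fin n} {f f' P : Fin n → ℝ}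
    (hf : Feasible c r f) (hf' : Feasible c r f') (hP : Conforms P (f' - f)) :
    ∃ ε : ℝ, 0 < ε ∧ Feasible c r (f + ε • P) := by
  set ρ : Fin n → ℝ := fun j => P j / (f' - f) j
  have hρ : ∀ j, 0 ≤ ρ j := hP.div_nonneg
  have hS : 0 < 1 + ∑ j, ρ j := by linarith [sum_nonneg fun j (_ : j ∈ univ) => hρ j]
  set ε := (1 + ∑ j, ρ j)⁻¹
  have hε : 0 < ε := inv_pos.2 hS
  refine ⟨ε, hε, fun j hj => ?_⟩
  -- `f + ε • P` moves each coordinate of `f` the fraction `ε * ρ j ≤ 1` of the way to `f'`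
  have ht : ε * ρ j ∈ Set.Icc (0 : ℝ) 1 := by
    refine ⟨mul_nonneg hε.le (hρ j), ?_⟩
    calc ε * ρ j ≤ ε * (1 + ∑ j, ρ j) := by
          gcongr; linarith [single_le_sum (fun j (_ : j ∈ univ) => hρ j) (mem_univ j)]
      _ = 1 := inv_mul_cancel₀ hS.ne'
  have hcoord : (f + ε • P) j = f j + ε * ρ j * (f' j - f j) := by
    by_cases hPj : P j = 0
    · simp [ρ, hPj]
    have hd : f' j - f j ≠ 0 := fun h => by simpa [h] using hP j hPj
    simp only [Pi.add_apply, Pi.smul_apply, Pi.sub_apply, smul_eq_mul, ρ]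
    field_simp
  rw [hcoord]
  exact (convex_Icc (0 : ℝ) (c j)).add_smul_sub_mem (hf j hj) (hf' j hj) ht

theorem stmt16_general (V : Submodule ℝ (Fin n → ℝ)) (hV : IsRegularSpace V)
    (r : Fin n) (c : Fin n → ℝ)
    (f f' : Fin n → ℝ) (hfV : f ∈ V) (hf : Feasible c r f)
    (hf'V : f' ∈ V) (hf' : Feasible c r f') (hr : f r < f' r) :
    ∃ P, Augmenting V c r f P ∧ Conforms P (f' - f) := by
  obtain ⟨m, A, hA, rfl⟩ := hV
  have hdr : 0 < (f' - f) r := sub_pos.2 hr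
  obtain ⟨z, hz, hzd, hzr⟩ := exists_isElementary_conforms (sub_mem hf'V hfV) hdr.ne'
  have hzr_pos : 0 < z r := pos_of_mul_pos_left (hzd r hzr) hdr.le
  have hPd : Conforms ((z r)⁻¹ • z) (f' - f) := hzd.smul_left (inv_pos.2 hzr_pos)
  obtain ⟨ε, hε, hfeas⟩ := exists_feasible_add_smul_of_conforms hf hf' hPd
  exact ⟨(z r)⁻¹ • z, ⟨⟨hz.isPrimitive_inv_smul hA hzr, by simp [hzr]⟩, ε, hε, hfeas⟩, hPd⟩

theorem stmt16 (V : Submodule ℝ (Fin n → ℝ)) (hV : IsRegularSpace V)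
    (r : Fin n) (c : Fin n → ℝ) (hc : ∀ j, j ≠ r → 0 ≤ c j)
    (f f' : Fin n → ℝ) (hfV : f ∈ V) (hf : Feasible c r f)
    (hf'V : f' ∈ V) (hf' : Feasible c r f') (hr : f r < f' r) :
    ∃ P, Augmenting V c r f P ∧ Conforms P (f' - f) :=
  stmt16_general V hV r c f f' hfV hf hf'V hf' hr
end

section
/- A subspace V ⊆ ℝ^n is the row space of some totally unimodular matrix if and only if it is the kernel of some totally unimodular matrix. -/
open Finset

variable {n : ℕ}

/-
Pivoting preserves total unimodularity. If `A` is totally unimodular with linearly independent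
rows and `M` is a nonsingular maximal square submatrix of `A`, then `det M = ±1`, so every maximal
minor of `M⁻¹ A` is `±` a maximal minor of `A`; as `M⁻¹ A` contains an identity matrix, every
square minor of it is a maximal minor, hence `M⁻¹ A` is totally unimodular. After permuting
columns it has the form `[I | D]` with `D` totally unimodular, and then
  row space `[I | D]` = kernel `[-Dᵀ | I]`,   kernel `[I | D]` = row space `[-Dᵀ | I]`,
where `[-Dᵀ | I]` is again totally unimodular. Since a kernel only depends on the row space,
this gives both directions at once.
-/

open Matrix Set Submodule

namespace SignType

variable {R : Type*} [CommRing R]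

lemma mul_mem_range_cast {a b : R} (ha : a ∈ range SignType.cast)
    (hb : b ∈ range SignType.cast) : a * b ∈ range SignType.cast := by
  obtain ⟨s, rfl⟩ := ha
  obtain ⟨s', rfl⟩ := hb
  exact ⟨s * s', coe_mul s s'⟩

lemma inverse_cast (s : SignType) : Ring.inverse (s : R) = s := by
  cases s
  · simp
  · simpa using Ring.inverse_unit (-1 : Rˣ)
  · simp

end SignType

namespace Matrix

variable {R : Type*} [CommRing R] {m t κ ι ι' : Type*}

lemma mem_span_range_iff_exists_vecMul [Fintype m] (A : Matrix m ι R) (x : ι → R) :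
    x ∈ span R (range A) ↔ ∃ y, y ᵥ* A = x := by
  rw [show range A = range A.row from rfl, ← range_vecMulLinear]
  rfl

lemma mulVec_eq_zero_iff_forall_mem_span [Fintype ι] (A : Matrix m ι R) (x : ι → R) :
    A *ᵥ x = 0 ↔ ∀ v ∈ span R (range A), v ⬝ᵥ x = 0 := by
  refine ⟨fun h v hv => ?_, fun h => funext fun i => h _ (subset_span ⟨i, rfl⟩)⟩
  induction hv using span_induction with
  | mem _ hv => obtain ⟨i, rfl⟩ := hv; exact congrFun h i
  | zero => exact zero_dotProduct x
  | add _ _ _ _ hv hw => rw [add_dotProduct, hv, hw, add_zero]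
  | smul _ _ _ hv => rw [smul_dotProduct, hv, smul_zero]

lemma ker_mulVecLin_eq_of_span_range_eq [Fintype ι] {A : Matrix m ι R} {B : Matrix t ι R}
    (h : span R (range A) = span R (range B)) :
    LinearMap.ker A.mulVecLin = LinearMap.ker B.mulVecLin := by
  ext x
  simp only [LinearMap.mem_ker, mulVecLin_apply, mulVec_eq_zero_iff_forall_mem_span, h]

lemma span_range_mul_le [Fintype m] (N : Matrix t m R) (A : Matrix m ι R) :
    span R (range (N * A)) ≤ span R (range A) :=
  span_le.mpr <| range_subset_iff.mpr fun i =>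
    (mem_span_range_iff_exists_vecMul A _).mpr ⟨N i, rfl⟩

lemma span_range_nonsing_inv_mul [Fintype m] [DecidableEq m] {M : Matrix m m R} (hM : IsUnit M)
    (A : Matrix m ι R) : span R (range (M⁻¹ * A)) = span R (range A) := by
  refine (span_range_mul_le _ _).antisymm ?_
  calc span R (range A) = span R (range (M * (M⁻¹ * A))) := by
        rw [← Matrix.mul_assoc, mul_nonsing_inv _ ((isUnit_iff_isUnit_det M).mp hM),
          Matrix.one_mul]
    _ ≤ span R (range (M⁻¹ * A)) := span_range_mul_le _ _

lemma span_range_submatrix_equiv (A : Matrix m ι R) (e : ι' ≃ ι) :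
    span R (range (A.submatrix id e)) =
      (span R (range A)).map (LinearEquiv.funCongrLeft R R e).toLinearMap := by
  change span R (range (LinearEquiv.funCongrLeft R R e ∘ A.row)) =
    Submodule.map _ (span R (range A.row))
  rw [range_comp, map_span]
  rfl

lemma ker_submatrix_equiv [Fintype ι] [Fintype ι'] (A : Matrix m ι R) (e : ι' ≃ ι) :
    LinearMap.ker (A.submatrix id e).mulVecLin =
      (LinearMap.ker A.mulVecLin).map (LinearEquiv.funCongrLeft R R e).toLinearMap := by
  ext x
  rw [Submodule.mem_map_equiv]
  simp only [LinearMap.mem_ker, mulVecLin_apply, submatrix_mulVec_equiv]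
  rfl

section StandardForm

variable [Fintype t] [Fintype κ] [DecidableEq t] [DecidableEq κ]

lemma span_range_fromCols_one (D : Matrix t κ R) :
    span R (range (fromCols 1 D)) = LinearMap.ker (fromCols (-Dᵀ) 1).mulVecLin := by
  ext x
  obtain ⟨u, w, rfl⟩ : ∃ u w, x = Sum.elim u w := ⟨_, _, (Sum.elim_comp_inl_inr x).symm⟩
  simp only [mem_span_range_iff_exists_vecMul, LinearMap.mem_ker, mulVecLin_apply,
    vecMul_fromCols, fromCols_mulVec_sumElim, Sum.elim_eq_iff, vecMul_one, one_mulVec,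
    neg_mulVec, mulVec_transpose, exists_eq_left, neg_add_eq_zero]

lemma ker_fromCols_one (D : Matrix t κ R) :
    LinearMap.ker (fromCols 1 D).mulVecLin = span R (range (fromCols (-Dᵀ) 1)) := by
  ext x
  obtain ⟨u, w, rfl⟩ : ∃ u w, x = Sum.elim u w := ⟨_, _, (Sum.elim_comp_inl_inr x).symm⟩
  simp only [mem_span_range_iff_exists_vecMul, LinearMap.mem_ker, mulVecLin_apply,
    vecMul_fromCols, fromCols_mulVec_sumElim, Sum.elim_eq_iff, vecMul_one, one_mulVec,
    vecMul_neg, vecMul_transpose, exists_eq_right, add_eq_zero_iff_eq_neg]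
  exact eq_comm

lemma span_range_eq_ker_and_ker_eq_span_range [Fintype ι] {B : Matrix t ι R} (e : t ⊕ κ ≃ ι)
    {D : Matrix t κ R} (hB : B.submatrix id e = fromCols 1 D) :
    span R (range B) = LinearMap.ker ((fromCols (-Dᵀ) 1).submatrix id e.symm).mulVecLin ∧
      LinearMap.ker B.mulVecLin = span R (range ((fromCols (-Dᵀ) 1).submatrix id e.symm)) := by
  have hC : ((fromCols (-Dᵀ) 1).submatrix id e.symm).submatrix id e = fromCols (-Dᵀ) 1 := by
    simp [submatrix_submatrix]
  have hmap := map_injective_of_injective (LinearEquiv.funCongrLeft R R e).injective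
  constructor <;> apply hmap <;>
    rw [← span_range_submatrix_equiv, ← ker_submatrix_equiv, hB, hC]
  exacts [span_range_fromCols_one D, ker_fromCols_one D]

end StandardForm

lemma IsTotallyUnimodular.neg {A : Matrix m ι R} (hA : A.IsTotallyUnimodular) :
    (-A).IsTotallyUnimodular := by
  rw [isTotallyUnimodular_iff] at hA ⊢
  intro k f g
  rw [show (-A).submatrix f g = -A.submatrix f g from rfl, det_neg]
  exact SignType.mul_mem_range_cast ⟨(-1) ^ Fintype.card (Fin k), by simp⟩ (hA k f g)

lemma injective_of_submatrix_eq_one [DecidableEq t] [Nontrivial R] {B : Matrix t ι R}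
    {J : t → ι} (hJ : B.submatrix id J = 1) : Function.Injective J := by
  intro i i' h
  by_contra hne
  have h0 := congrFun₂ hJ i i'
  rw [submatrix_apply, id, ← h, one_apply_ne hne] at h0
  simpa [h0] using congrFun₂ hJ i i

section Pivot

variable [Fintype t] [DecidableEq t]

lemma isTotallyUnimodular_of_submatrix_eq_one {B : Matrix t ι R} {J : t → ι}
    (hJ : B.submatrix id J = 1)
    (hB : ∀ g : t → ι, (B.submatrix id g).det ∈ range SignType.cast) :
    B.IsTotallyUnimodular := by
  classical
  intro k f g hf _
  -- Border the minor on rows `f` and columns `g` by the remaining rows and their unit columns.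
  let e : Fin k ⊕ ↥(range f)ᶜ ≃ t :=
    ((Equiv.ofInjective f hf).sumCongr (Equiv.refl _)).trans (Equiv.Set.sumCompl (range f))
  let γ : Fin k ⊕ ↥(range f)ᶜ → ι := Sum.elim g (J ∘ Subtype.val)
  have hBJ (i i' : t) : B i (J i') = (1 : Matrix t t R) i i' := congrFun₂ hJ i i'
  have hblocks :
      B.submatrix e γ = fromBlocks (B.submatrix f g) 0 (B.submatrix Subtype.val g) 1 := by
    ext (a | a) (b | b)
    · rfl
    · simpa [e, γ, hBJ] using one_apply_ne fun h : f a = b => b.2 ⟨a, h⟩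
    · rfl
    · simp [e, γ, hBJ, one_apply, Subtype.ext_iff]
  have hdet : (B.submatrix f g).det = (B.submatrix id (γ ∘ e.symm)).det := by
    calc (B.submatrix f g).det = (B.submatrix e γ).det := by
          rw [hblocks, det_fromBlocks_zero₁₂, det_one, mul_one]
      _ = ((B.submatrix id (γ ∘ e.symm)).submatrix e e).det := by
          simp [submatrix_submatrix, Function.comp_assoc]
      _ = (B.submatrix id (γ ∘ e.symm)).det := det_submatrix_equiv_self e _
  exact hdet ▸ hB _

lemma nonsing_inv_mul_submatrix_eq_one {A : Matrix t ι R} {J : t → ι}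
    (hJ : IsUnit (A.submatrix id J)) : ((A.submatrix id J)⁻¹ * A).submatrix id J = 1 :=
  nonsing_inv_mul _ ((isUnit_iff_isUnit_det _).mp hJ)

lemma IsTotallyUnimodular.nonsing_inv_mul {A : Matrix t ι R} (hA : A.IsTotallyUnimodular)
    {J : t → ι} (hJ : IsUnit (A.submatrix id J)) :
    ((A.submatrix id J)⁻¹ * A).IsTotallyUnimodular := by
  refine isTotallyUnimodular_of_submatrix_eq_one (nonsing_inv_mul_submatrix_eq_one hJ) fun g => ?_
  have hminor := (isTotallyUnimodular_iff_fintype A).mp hA t id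
  obtain ⟨s, hs⟩ := hminor J
  rw [show ((A.submatrix id J)⁻¹ * A).submatrix id g = (A.submatrix id J)⁻¹ * A.submatrix id g
    from rfl, det_mul, det_nonsing_inv, ← hs, SignType.inverse_cast]
  exact SignType.mul_mem_range_cast ⟨s, rfl⟩ (hminor g)

end Pivot

lemma exists_isUnit_submatrix_of_linearIndependent_row {K : Type*} [Field K] [Fintype t]
    [Fintype ι] [DecidableEq t] {A : Matrix t ι K} (hA : LinearIndependent K A.row) :
    ∃ J : t → ι, IsUnit (A.submatrix id J) := by
  obtain ⟨κ, a, ha, hspan, hli⟩ := exists_linearIndependent' K A.col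
  have := Fintype.ofInjective a ha
  have hcard : Fintype.card t = Fintype.card κ := by
    rw [← hA.rank_matrix, rank_eq_finrank_span_cols, ← hspan,
      linearIndependent_iff_card_eq_finrank_span.mp hli, Set.finrank]
  refine ⟨a ∘ Fintype.equivOfCardEq hcard, ?_⟩
  rw [← linearIndependent_cols_iff_isUnit]
  exact hli.comp _ (Fintype.equivOfCardEq hcard).injective

end Matrix

lemma Function.Injective.exists_sum_fin_equiv {t ι : Type*} [Finite ι] {J : t → ι}
    (hJ : Function.Injective J) : ∃ (k : ℕ) (e : t ⊕ Fin k ≃ ι), ∀ i, e (.inl i) = J i := by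
  classical
  have := Fintype.ofFinite ι
  exact ⟨_, ((Equiv.ofInjective J hJ).sumCongr (Fintype.equivFin _).symm).trans
    (Equiv.Set.sumCompl (range J)), fun i => rfl⟩

theorem Matrix.IsTotallyUnimodular.exists_dual {K m ι : Type*} [Field K] [Fintype m]
    [Fintype ι] {A : Matrix m ι K} (hA : A.IsTotallyUnimodular) :
    ∃ (k : ℕ) (C : Matrix (Fin k) ι K), C.IsTotallyUnimodular ∧
      span K (range A) = LinearMap.ker C.mulVecLin ∧
      LinearMap.ker A.mulVecLin = span K (range C) := by
  classical
  obtain ⟨t, r, hr, hspan_r, hli_r⟩ := exists_linearIndependent' K A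
  have := Fintype.ofInjective r hr
  obtain ⟨J, hJ⟩ := exists_isUnit_submatrix_of_linearIndependent_row (A := A.submatrix r id) hli_r
  set B := ((A.submatrix r id).submatrix id J)⁻¹ * A.submatrix r id
  have hB : B.IsTotallyUnimodular := (hA.submatrix r id).nonsing_inv_mul hJ
  have hspan_B : span K (range B) = span K (range A) :=
    (span_range_nonsing_inv_mul hJ _).trans hspan_r
  have hBJ : B.submatrix id J = 1 := nonsing_inv_mul_submatrix_eq_one hJ
  obtain ⟨k, e, he⟩ := (injective_of_submatrix_eq_one hBJ).exists_sum_fin_equiv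
  have hBe : B.submatrix id e = fromCols 1 (B.submatrix id (e ∘ Sum.inr)) := by
    ext i (j | j)
    · simpa [he] using congrFun₂ hBJ i j
    · rfl
  obtain ⟨hspan, hker⟩ := span_range_eq_ker_and_ker_eq_span_range e hBe
  refine ⟨k, _, ((hB.submatrix id _).transpose.neg.fromCols_one).submatrix id e.symm,
    hspan_B ▸ hspan, ?_⟩
  rw [ker_mulVecLin_eq_of_span_range_eq hspan_B.symm, hker]

theorem stmt17 (V : Submodule ℝ (Fin n → ℝ)) :
    (∃ (m : ℕ) (A : Matrix (Fin m) (Fin n) ℝ),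
        A.IsTotallyUnimodular ∧ V = Submodule.span ℝ (Set.range A)) ↔
      IsRegularSpace V := by
  constructor
  · rintro ⟨m, A, hA, rfl⟩
    obtain ⟨k, C, hC, hspan, -⟩ := hA.exists_dual
    exact ⟨k, C, hC, hspan⟩
  · rintro ⟨m, A, hA, rfl⟩
    obtain ⟨k, C, hC, -, hker⟩ := hA.exists_dual
    exact ⟨k, C, hC, hker⟩
end
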